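/- Let d > 1, K₀ > 0, and k ∈ ℤⁿ. The number of pairs (i,j) of positive integers with i ≠ j such that |i^d − j^d| ≤ (4/K₀)|k| is bounded by C|k|^{2/(d−1)} for a constant C depending only on d and K₀. -/
import Mathlib

lemma gap_lemma (d : ℝ) (hd : 1 < d) (i j : ℕ) (hj : 0 < j) (hji : j < i) :
    (i : ℝ) ^ (d - 1) ≤ (i : ℝ) ^ d - (j : ℝ) ^ d := by
  have hi2 : (2 : ℝ) ≤ (i : ℝ) := by exact_mod_cast hji.trans_le' hj
  have hipos : (0 : ℝ) < i := by linarith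
  have hj1 : (j : ℝ) ≤ (i : ℝ) - 1 := by
    have : (j : ℝ) + 1 ≤ i := by exact_mod_cast hji
    linarith
  have hjnn : (0 : ℝ) ≤ j := Nat.cast_nonneg j
  have h1 : (j : ℝ) ^ d ≤ ((i : ℝ) - 1) ^ d :=
    Real.rpow_le_rpow hjnn hj1 (by linarith)
  have hb0 : (0 : ℝ) < 1 - 1 / (i : ℝ) := by
    rw [sub_pos, div_lt_one hipos]; linarith
  have hb1 : 1 - 1 / (i : ℝ) ≤ 1 := by
    have : 0 ≤ 1 / (i : ℝ) := by positivity
    linarith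
  have h2 : ((i : ℝ) - 1) ^ d = (i : ℝ) ^ d * (1 - 1 / (i : ℝ)) ^ d := by
    rw [← Real.mul_rpow (by linarith) hb0.le]
    congr 1
    field_simp
  have h3 : (1 - 1 / (i : ℝ)) ^ d ≤ (1 - 1 / (i : ℝ)) ^ (1 : ℝ) :=
    Real.rpow_le_rpow_of_exponent_ge hb0 hb1 (by linarith)
  have h4 : (i : ℝ) ^ d * (1 / (i : ℝ)) = (i : ℝ) ^ (d - 1) := by
    rw [Real.rpow_sub hipos, Real.rpow_one]
    ring
  have hidp : (0 : ℝ) ≤ (i : ℝ) ^ d := Real.rpow_nonneg hipos.le d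
  rw [Real.rpow_one] at h3
  have : ((i : ℝ) - 1) ^ d ≤ (i : ℝ) ^ d - (i : ℝ) ^ (d - 1) := by
    rw [h2, ← h4]
    nlinarith [mul_le_mul_of_nonneg_left h3 hidp]
  linarith

/-- for `d > 1` the number of pairs `(i,j)` of distinct positive
integers with `|i^d − j^d| ≤ (4/K₀)|k|₁` is at most `C|k|₁^{2/(d−1)}`. -/
theorem stmt_18 (n : ℕ) (d : ℝ) (hd : 1 < d) (K₀ : ℝ) (hK₀ : 0 < K₀) :
    ∃ C > 0, ∀ k : Fin n → ℤ,
      ({p : ℕ × ℕ | 0 < p.1 ∧ 0 < p.2 ∧ p.1 ≠ p.2 ∧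
          |(p.1 : ℝ) ^ d - (p.2 : ℝ) ^ d| ≤ 4 / K₀ * ∑ m, |(k m : ℝ)|}).Finite ∧
      (Nat.card {p : ℕ × ℕ | 0 < p.1 ∧ 0 < p.2 ∧ p.1 ≠ p.2 ∧
          |(p.1 : ℝ) ^ d - (p.2 : ℝ) ^ d| ≤ 4 / K₀ * ∑ m, |(k m : ℝ)|} : ℝ)
        ≤ C * (∑ m, |(k m : ℝ)|) ^ (2 / (d - 1)) := by
  have hd1 : (0 : ℝ) < d - 1 := by linarith
  refine ⟨(4 / K₀) ^ (2 / (d - 1)), Real.rpow_pos_of_pos (by positivity) _, fun k => ?_⟩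
  set S : ℝ := ∑ m, |(k m : ℝ)| with hS
  have hSnn : 0 ≤ S := Finset.sum_nonneg fun m _ => abs_nonneg _
  set M : ℝ := 4 / K₀ * S with hM
  have hMnn : 0 ≤ M := by positivity
  set B : ℝ := M ^ (1 / (d - 1)) with hB
  have hBnn : 0 ≤ B := Real.rpow_nonneg hMnn _
  set N : ℕ := ⌊B⌋₊ with hN
  set T := {p : ℕ × ℕ | 0 < p.1 ∧ 0 < p.2 ∧ p.1 ≠ p.2 ∧
      |(p.1 : ℝ) ^ d - (p.2 : ℝ) ^ d| ≤ 4 / K₀ * S} with hT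
  -- any element has both coordinates ≤ N
  have hbound : ∀ i j : ℕ, 0 < j → j < i →
      |(i : ℝ) ^ d - (j : ℝ) ^ d| ≤ M → i ≤ N ∧ j ≤ N := by
    intro i j hj hji hle
    have hkey := gap_lemma d hd i j hj hji
    have hiM : (i : ℝ) ^ (d - 1) ≤ M := hkey.trans ((le_abs_self _).trans hle)
    have hiB : (i : ℝ) ≤ B := by
      rw [hB, one_div]
      rw [Real.le_rpow_inv_iff_of_pos (Nat.cast_nonneg i) hMnn hd1]
      exact hiM
    have hiN : i ≤ N := Nat.le_floor hiB
    exact ⟨hiN, le_trans hji.le hiN⟩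
  have hsub : T ⊆ ↑(Finset.Icc 1 N ×ˢ Finset.Icc 1 N) := by
    rintro ⟨i, j⟩ ⟨h1, h2, hne, hle⟩
    rcases lt_or_gt_of_ne hne with h | h
    · obtain ⟨hj', hi'⟩ := hbound j i h1 h (by rwa [abs_sub_comm] at hle)
      simp only [Finset.coe_product, Set.mem_prod, Finset.mem_coe, Finset.mem_Icc]
      exact ⟨⟨h1, hi'⟩, ⟨h2, hj'⟩⟩
    · obtain ⟨hi', hj'⟩ := hbound i j h2 h hle
      simp only [Finset.coe_product, Set.mem_prod, Finset.mem_coe, Finset.mem_Icc]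
      exact ⟨⟨h1, hi'⟩, ⟨h2, hj'⟩⟩
  have hfin : T.Finite := Set.Finite.subset (Finset.finite_toSet _) hsub
  refine ⟨hfin, ?_⟩
  have hcard : Nat.card T ≤ N * N := by
    have := Set.ncard_le_ncard hsub (Finset.finite_toSet _)
    rw [Set.ncard_coe_finset, Finset.card_product, Nat.card_Icc] at this
    simpa [Nat.card_coe_set_eq] using this
  have hNB : (N : ℝ) ≤ B := Nat.floor_le hBnn
  calc (Nat.card T : ℝ) ≤ (N : ℝ) * N := by exact_mod_cast hcard
    _ ≤ B * B := mul_le_mul hNB hNB (Nat.cast_nonneg N) hBnn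
    _ = M ^ (2 / (d - 1)) := by
        have h2d : 2 / (d - 1) = 1 / (d - 1) + 1 / (d - 1) := by ring
        rw [hB, h2d, Real.rpow_add_of_nonneg hMnn (by positivity) (by positivity)]
    _ = (4 / K₀) ^ (2 / (d - 1)) * S ^ (2 / (d - 1)) :=
        Real.mul_rpow (by positivity) hSnn
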